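/- arXiv:2011.01924 — 3 statements merged into one kernel-verified Lean document; each statement's English description precedes it below -/
import Mathlib

section
/- Let A ∈ ℝ^{n×n} and B ∈ ℝ^{n×m} with (A,B) controllable, and let ν be the controllability index (the smallest positive integer with [B, AB, …, A^{ν−1}B] full row rank). Then there exists a gain L ∈ ℝ^{m×n} such that (A − BL)^ν = 0. -/
/-!
Let `W k` be the states that some input sequence steers to `0` in `k` steps:
`W 0 = 0`, `W (k+1) = A⁻¹ (W k + range B)`. If `A^k x` is reachable in `k` steps then `x ∈ W k`,
so a full-rank controllability matrix `[B, AB, …, A^(ν-1)B]` gives `W ν = V`. The gain is built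
one level at a time so that `A - Bℓ` maps `W (k+1)` into `W k`: the correction at level `k` is a
linear lift through `B` modulo `W k`, and it vanishes wherever `A - Bℓ` already lands in `W k`,
so the lower levels are not disturbed. Then `(A - Bℓ)^ν` kills `W ν = V`.
-/

open Matrix

namespace Deadbeat

open Submodule LinearMap

variable {K V U : Type*} [DivisionRing K] [AddCommGroup V] [Module K V] [AddCommGroup U] [Module K U]

def reachable (A : Module.End K V) (B : U →ₗ[K] V) (k : ℕ) : Submodule K V :=
  ⨆ j < k, range ((A ^ j) ∘ₗ B)

def nullControllable (A : Module.End K V) (B : U →ₗ[K] V) : ℕ → Submodule K V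
  | 0 => ⊥
  | k + 1 => (nullControllable A B k ⊔ range B).comap A

variable (A : Module.End K V) (B : U →ₗ[K] V)

theorem nullControllable_mono : Monotone (nullControllable A B) := by
  refine monotone_nat_of_le_succ fun k => ?_
  induction k with
  | zero => exact bot_le
  | succ k ih => exact comap_mono (sup_le_sup_right ih _)

theorem comap_pow_reachable_le_nullControllable (k : ℕ) :
    (reachable A B k).comap (A ^ k) ≤ nullControllable A B k := by
  induction k with
  | zero => simp [reachable, nullControllable, Module.End.one_eq_id]
  | succ k ih =>
    intro x hx
    obtain ⟨r, hr, _, ⟨u, rfl⟩, hru⟩ :=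
      mem_sup.mp (by simpa only [mem_comap, reachable, Nat.iSup_lt_succ] using hx)
    have hsteer : (A ^ k) (A x - B u) = r := by
      rw [map_sub, ← Module.End.mul_apply, ← pow_succ, ← hru]
      simp
    have hW : A x - B u ∈ nullControllable A B k := ih (mem_comap.mpr (hsteer ▸ hr))
    exact mem_comap.mpr (mem_sup.mpr ⟨_, hW, B u, mem_range_self B u, sub_add_cancel _ _⟩)

theorem exists_feedback_of_mem_sup_range {V' : Type*} [AddCommGroup V'] [Module K V']
    (F : V →ₗ[K] V') (B : U →ₗ[K] V') (S : Submodule K V) (T : Submodule K V')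
    (hF : ∀ x ∈ S, F x ∈ T ⊔ range B) :
    ∃ δ : V →ₗ[K] U, ∀ x ∈ S, F x - B (δ x) ∈ T ∧ (F x ∈ T → δ x = 0) := by
  set β := T.mkQ ∘ₗ B
  have hlift : ∀ x : S, (T.mkQ ∘ₗ F ∘ₗ S.subtype) x ∈ range β := by
    intro ⟨x, hx⟩
    obtain ⟨t, ht, _, ⟨u, rfl⟩, htu⟩ := mem_sup.mp (hF x hx)
    exact ⟨u, by simp [β, ← htu, (Quotient.mk_eq_zero T).mpr ht]⟩
  obtain ⟨τ, hτ⟩ := β.rangeRestrict.exists_rightInverse_of_surjective (range_rangeRestrict β)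
  set c := (T.mkQ ∘ₗ F ∘ₗ S.subtype).codRestrict _ hlift
  obtain ⟨δ, hδ⟩ := LinearMap.exists_extend (τ ∘ₗ c)
  refine ⟨δ, fun x hx => ?_⟩
  have hδx : δ x = τ (c ⟨x, hx⟩) := congr($hδ ⟨x, hx⟩)
  refine ⟨?_, fun hFx => ?_⟩
  · have hβδ : β (δ x) = T.mkQ (F x) := by
      rw [hδx]
      exact congrArg Subtype.val (LinearMap.congr_fun hτ (c ⟨x, hx⟩))
    rw [← Quotient.mk_eq_zero, Quotient.mk_sub]
    exact sub_eq_zero.mpr hβδ.symm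
  · have hc : c ⟨x, hx⟩ = 0 := Subtype.ext ((Quotient.mk_eq_zero T).mpr hFx)
    rw [hδx, hc, map_zero]

theorem exists_feedback_mapsTo_nullControllable (N : ℕ) :
    ∃ ℓ : V →ₗ[K] U, ∀ k < N, ∀ x ∈ nullControllable A B (k + 1),
      (A - B ∘ₗ ℓ) x ∈ nullControllable A B k := by
  induction N with
  | zero => exact ⟨0, by omega⟩
  | succ N ih =>
    obtain ⟨ℓ, hℓ⟩ := ih
    have hstep : ∀ x ∈ nullControllable A B (N + 1),
        (A - B ∘ₗ ℓ) x ∈ nullControllable A B N ⊔ range B := fun x hx =>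
      sub_mem (mem_comap.mp hx) (mem_sup_right (mem_range_self B (ℓ x)))
    obtain ⟨δ, hδ⟩ := exists_feedback_of_mem_sup_range _ B _ _ hstep
    have hsplit : ∀ x, (A - B ∘ₗ (ℓ + δ)) x = (A - B ∘ₗ ℓ) x - B (δ x) := fun x => by
      simp only [LinearMap.sub_apply, LinearMap.comp_apply, LinearMap.add_apply, map_add]
      abel
    refine ⟨ℓ + δ, fun k hk x hx => ?_⟩
    have hxN : x ∈ nullControllable A B (N + 1) := nullControllable_mono A B (by omega) hx
    rw [hsplit]
    rcases Nat.lt_succ_iff_lt_or_eq.mp hk with hk | rfl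
    · have hkx := hℓ k hk x hx
      rw [(hδ x hxN).2 (nullControllable_mono A B hk.le hkx), map_zero, sub_zero]
      exact hkx
    · exact (hδ x hxN).1

theorem exists_pow_sub_comp_eq_zero (ν : ℕ) (hν : reachable A B ν = ⊤) :
    ∃ ℓ : V →ₗ[K] U, (A - B ∘ₗ ℓ) ^ ν = 0 := by
  obtain ⟨ℓ, hℓ⟩ := exists_feedback_mapsTo_nullControllable A B ν
  have hkill : ∀ k ≤ ν, ∀ x ∈ nullControllable A B k, ((A - B ∘ₗ ℓ) ^ k) x = 0 := by
    intro k
    induction k with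
    | zero => simp [nullControllable]
    | succ k ih =>
      intro hk x hx
      rw [pow_succ, Module.End.mul_apply]
      exact ih (by omega) _ (hℓ k hk x hx)
  refine ⟨ℓ, LinearMap.ext fun x => hkill ν le_rfl x ?_⟩
  exact comap_pow_reachable_le_nullControllable A B ν (by simp [hν])

theorem reachable_toLin'_eq_top_of_rank_eq {F ι μ : Type*} [Field F] [Fintype ι] [DecidableEq ι]
    [Fintype μ] [DecidableEq μ] (A : Matrix ι ι F) (B : Matrix ι μ F) (ν : ℕ)
    (h : (Matrix.of fun i (p : Fin ν × μ) => (A ^ (p.1 : ℕ) * B) i p.2).rank = Fintype.card ι) :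
    reachable (toLin' A) (toLin' B) ν = ⊤ := by
  set M := Matrix.of fun i (p : Fin ν × μ) => (A ^ (p.1 : ℕ) * B) i p.2
  have hM : range M.mulVecLin = ⊤ :=
    eq_top_of_finrank_eq (by rw [Module.finrank_fintype_fun_eq_card, ← h]; rfl)
  rw [eq_top_iff, ← hM]
  rintro _ ⟨u, rfl⟩
  have hsum : M.mulVecLin u = ∑ j : Fin ν, toLin' (A ^ (j : ℕ) * B) (fun i => u (j, i)) := by
    funext i
    simp only [Matrix.mulVecLin_apply, Matrix.mulVec, dotProduct, Finset.sum_apply,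
      Fintype.sum_prod_type]
    rfl
  rw [hsum]
  refine sum_mem fun j _ => ?_
  refine le_iSup₂_of_le (f := fun k _ => range ((toLin' A ^ k) ∘ₗ toLin' B)) (j : ℕ) j.2 le_rfl ?_
  rw [← toLin'_pow, ← toLin'_mul]
  exact mem_range_self _ _

end Deadbeat

open Deadbeat in
theorem stmt4_general {n m : ℕ}
    (A : Matrix (Fin n) (Fin n) ℝ) (B : Matrix (Fin n) (Fin m) ℝ)
    (ν : ℕ)
    (hfull : (Matrix.of fun (i : Fin n) (p : Fin ν × Fin m) =>
      ((A ^ (p.1 : ℕ)) * B) i p.2).rank = n) :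
    ∃ L : Matrix (Fin m) (Fin n) ℝ, (A - B * L) ^ ν = 0 := by
  have hreach := reachable_toLin'_eq_top_of_rank_eq A B ν (by rwa [Fintype.card_fin])
  obtain ⟨ℓ, hℓ⟩ := exists_pow_sub_comp_eq_zero _ _ ν hreach
  refine ⟨LinearMap.toMatrix' ℓ, toLin'.injective ?_⟩
  simpa [toLin'_pow, toLin'_mul] using hℓ

/-- deadbeat control: a controllable pair `(A,B)` with
controllability index `ν` admits a gain `L` with `(A − B L)^ν = 0`. -/
theorem stmt4 {n m : ℕ}
    (A : Matrix (Fin n) (Fin n) ℝ) (B : Matrix (Fin n) (Fin m) ℝ)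
    (hcont : (Matrix.of fun (i : Fin n) (p : Fin n × Fin m) =>
      ((A ^ (p.1 : ℕ)) * B) i p.2).rank = n)
    (ν : ℕ) (hν : 0 < ν)
    (hfull : (Matrix.of fun (i : Fin n) (p : Fin ν × Fin m) =>
      ((A ^ (p.1 : ℕ)) * B) i p.2).rank = n)
    (hmin : ∀ k : ℕ, 0 < k → k < ν →
      (Matrix.of fun (i : Fin n) (p : Fin k × Fin m) =>
        ((A ^ (p.1 : ℕ)) * B) i p.2).rank ≠ n) :
    ∃ L : Matrix (Fin m) (Fin n) ℝ, (A - B * L) ^ ν = 0 :=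
  stmt4_general A B ν hfull
end

section
/- Let {a_k} be a nonnegative real sequence satisfying a_{k+1} ≤ ρ(a_k) + b_k where ρ : [0,∞) → [0,∞) is continuous with ρ(s) < s for all s > 0, ρ(0) = 0, and b_k → 0. If additionally a_k is bounded, then a_k → 0. -/
/-!
Far from the origin `ρ` contracts uniformly: by compactness, `s - ρ s ≥ δ > 0` on `[ε, M]`.
Once `b k` is small, the sequence therefore drops by a fixed amount while it stays above `ε`,
so boundedness below forces it under `ε`; and from below `ε` it can only climb to `ε + b k`,
after which it decreases again. Hence `a k` eventually stays below any `2ε`.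
-/

open Filter Set

theorem exists_ge_lt_of_forall_le_sub {a : ℕ → ℝ} {m δ ε : ℝ} (hm : ∀ k, m ≤ a k) (hδ : 0 < δ)
    (N : ℕ) (hstep : ∀ k ≥ N, ε ≤ a k → a (k + 1) ≤ a k - δ) : ∃ k ≥ N, a k < ε := by
  by_contra! habove
  have hdrop : ∀ j : ℕ, a (N + j) ≤ a N - j * δ := by
    intro j
    induction j with
    | zero => simp
    | succ j ih =>
      have := hstep (N + j) (Nat.le_add_right N j) (habove _ (Nat.le_add_right N j))
      rw [← add_assoc]
      push_cast
      linarith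
  obtain ⟨j, hj⟩ := exists_nat_gt ((a N - m) / δ)
  have := (div_lt_iff₀ hδ).mp hj
  linarith [hdrop j, hm (N + j)]

theorem eventually_lt_of_forall_le_sub {a : ℕ → ℝ} {m δ ε η : ℝ} (hm : ∀ k, m ≤ a k)
    (hδ : 0 < δ) (hεη : ε ≤ η) (N : ℕ) (hstep : ∀ k ≥ N, ε ≤ a k → a (k + 1) ≤ a k - δ)
    (hlow : ∀ k ≥ N, a k < ε → a (k + 1) < η) : ∀ᶠ k in atTop, a k < η := by
  obtain ⟨k₀, hk₀N, hk₀⟩ := exists_ge_lt_of_forall_le_sub hm hδ N hstep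
  refine eventually_atTop.2 ⟨k₀, fun k hk => ?_⟩
  induction k, hk using Nat.le_induction with
  | base => exact hk₀.trans_le hεη
  | succ k hk ih =>
    rcases lt_or_ge (a k) ε with hkε | hkε
    · exact hlow k (hk₀N.trans hk) hkε
    · linarith [hstep k (hk₀N.trans hk) hkε]

theorem exists_pos_le_sub_of_lt_self {ρ : ℝ → ℝ} (hρ_cont : ContinuousOn ρ (Ici 0))
    (hρ_contr : ∀ s, 0 < s → ρ s < s) {ε : ℝ} (hε : 0 < ε) (M : ℝ) :
    ∃ δ > 0, ∀ s ∈ Icc ε M, δ ≤ s - ρ s :=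
  isCompact_Icc.exists_forall_le'
    (continuousOn_id.sub (hρ_cont.mono fun _ hs => hε.le.trans hs.1))
    fun s hs => sub_pos.2 (hρ_contr s (hε.trans_le hs.1))

theorem stmt11_general (a b : ℕ → ℝ) (ρ : ℝ → ℝ)
    (ha_nonneg : ∀ k, 0 ≤ a k)
    (hρ_cont : ContinuousOn ρ (Set.Ici 0))
    (hρ_contr : ∀ s, 0 < s → ρ s < s)
    (hρ0 : ρ 0 = 0)
    (hrec : ∀ k, a (k + 1) ≤ ρ (a k) + b k)
    (hb : Tendsto b atTop (nhds 0))
    (M : ℝ) (hbdd : ∀ k, a k ≤ M) :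
    Tendsto a atTop (nhds 0) := by
  have hρ_le : ∀ s, 0 ≤ s → ρ s ≤ s := fun s hs =>
    hs.eq_or_lt.elim (fun h => by simp [← h, hρ0]) fun h => (hρ_contr s h).le
  refine tendsto_order.2 ⟨fun ε hε => .of_forall fun k => hε.trans_le (ha_nonneg k),
    fun ε hε => ?_⟩
  obtain ⟨δ, hδ, hgap⟩ := exists_pos_le_sub_of_lt_self hρ_cont hρ_contr (half_pos hε) M
  obtain ⟨N, hbN⟩ := eventually_atTop.1 <|
    hb.eventually (gt_mem_nhds (lt_min (half_pos hδ) (half_pos hε)))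
  refine eventually_lt_of_forall_le_sub ha_nonneg (half_pos hδ) (half_le_self hε.le) N
    (fun k hk hkε => ?_) (fun k hk hkε => ?_)
  · linarith [hrec k, hgap (a k) ⟨hkε, hbdd k⟩, (hbN k hk).trans_le (min_le_left _ _)]
  · linarith [hrec k, hρ_le (a k) (ha_nonneg k), (hbN k hk).trans_le (min_le_right _ _)]

/-- comparison lemma for ISS: `a_{k+1} ≤ ρ(a_k) + b_k` with
contraction `ρ` and vanishing `b_k` forces the bounded sequence `a_k → 0`. -/
theorem stmt11 (a b : ℕ → ℝ) (ρ : ℝ → ℝ)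
    (ha_nonneg : ∀ k, 0 ≤ a k)
    (hρ_cont : ContinuousOn ρ (Set.Ici 0))
    (hρ_nonneg : ∀ s, 0 ≤ s → 0 ≤ ρ s)
    (hρ_contr : ∀ s, 0 < s → ρ s < s)
    (hρ0 : ρ 0 = 0)
    (hrec : ∀ k, a (k + 1) ≤ ρ (a k) + b k)
    (hb : Tendsto b atTop (nhds 0))
    (M : ℝ) (hbdd : ∀ k, a k ≤ M) :
    Tendsto a atTop (nhds 0) :=
  stmt11_general a b ρ ha_nonneg hρ_cont hρ_contr hρ0 hrec hb M hbdd
end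

section
/- Consider the parametric quadratic program min_v { ½vᵀHv + qᵀv : Gv ≤ w + Sx } with H symmetric positive definite and polyhedral feasible set nonempty for all x in a set 𝒟. Then the solution map x ↦ v*(x) is single-valued, and is Lipschitz continuous on any convex subset of 𝒟 where the feasible set map x ↦ {v : Gv ≤ w + Sx} is nonempty. -/
/-!
On a fixed active set `A` the optimality conditions (the constraints in `A` hold with equality
and the gradient `H v + q` is orthogonal to every direction keeping them active) form a linear
system in `v` with a unique solution, which is affine in the parameter `x`. Hence the solution
map agrees at every parameter with one of finitely many affine maps. Along a segment in the
parameter domain the optimal value is a convex function of the position, hence upper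
semicontinuous; with coercivity of the objective and the closed convex graph of the feasible-set
map this makes the unique minimizer continuous along the segment. Finally, a continuous curve
that at every time agrees with one of finitely many affine curves is Lipschitz with any constant
bounding their speeds (mean value inequality for Dini derivatives).
-/

open Set Filter Topology Matrix

theorem ConvexOn.exists_le_add_mul_abs_sub {V : ℝ → ℝ} {a b t : ℝ} (hV : ConvexOn ℝ (Icc a b) V)
    (ht : t ∈ Icc a b) : ∃ M, ∀ s ∈ Icc a b, V s ≤ V t + M * |s - t| := by
  set Mr := (V b - V t) / (b - t)
  set Ml := (V a - V t) / (a - t)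
  refine ⟨|Mr| + |Ml|, fun s hs => ?_⟩
  rcases lt_trichotomy s t with hst | rfl | hts
  · have hsec : Ml ≤ (V s - V t) / (s - t) :=
      hV.secant_mono ht (left_mem_Icc.2 (hs.1.trans hs.2)) hs (hs.1.trans_lt hst).ne hst.ne hs.1
    have hneg : s - t < 0 := sub_neg.2 hst
    rw [le_div_iff_of_neg hneg] at hsec
    rw [abs_of_neg hneg]
    nlinarith [neg_abs_le Ml, abs_nonneg Mr]
  · simp
  · have hsec : (V s - V t) / (s - t) ≤ Mr :=
      hV.secant_mono ht hs (right_mem_Icc.2 (hs.1.trans hs.2)) hts.ne' (hts.trans_le hs.2).ne' hs.2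
    have hpos : 0 < s - t := sub_pos.2 hts
    rw [div_le_iff₀ hpos] at hsec
    rw [abs_of_pos hpos]
    nlinarith [le_abs_self Mr, abs_nonneg Ml]

theorem exists_isMinOn_of_tendsto_cocompact {E : Type*} [TopologicalSpace E] {f : E → ℝ}
    (hfc : Continuous f) (hcoer : Tendsto f (cocompact E) atTop) {s : Set E} (hs : IsClosed s)
    (hne : s.Nonempty) : ∃ v ∈ s, IsMinOn f s v := by
  obtain ⟨v₀, hv₀⟩ := hne
  exact hfc.continuousOn.exists_isMinOn' hs hv₀
    ((hcoer.eventually (eventually_ge_atTop (f v₀))).filter_mono inf_le_left)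

section ParametricMinimization

variable {X E : Type*} [NormedAddCommGroup X] [NormedSpace ℝ X] [NormedAddCommGroup E]
  [NormedSpace ℝ E] {f : E → ℝ}

theorem Convex.prodMk_preimage {s : Set (X × E)} (hs : Convex ℝ s) (x : X) :
    Convex ℝ (Prod.mk x ⁻¹' s) := by
  intro u hu v hv a b ha hb hab
  simpa [Prod.smul_mk, Prod.mk_add_mk, ← add_smul, hab] using hs hu hv ha hb hab

theorem convexOn_comp_lineMap_of_isMinOn (hf : ConvexOn ℝ univ f) {K : X → Set E}
    (hKconv : Convex ℝ {p : X × E | p.2 ∈ K p.1}) {v : X → E} {x y : X}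
    (hv : ∀ z ∈ segment ℝ x y, v z ∈ K z ∧ IsMinOn f (K z) (v z)) :
    ConvexOn ℝ (Icc (0 : ℝ) 1) fun t => f (v (AffineMap.lineMap x y t)) := by
  set γ : ℝ →ᵃ[ℝ] X := AffineMap.lineMap x y
  have hγ : ∀ t ∈ Icc (0 : ℝ) 1, γ t ∈ segment ℝ x y := fun t ht => lineMap_mem_segment ℝ x y ht
  refine ⟨convex_Icc 0 1, fun s hs t ht a b ha hb hab => ?_⟩
  have hmem : a • v (γ s) + b • v (γ t) ∈ K (γ (a • s + b • t)) := by
    have := hKconv (x := (γ s, v (γ s))) (hv _ (hγ s hs)).1 (y := (γ t, v (γ t)))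
      (hv _ (hγ t ht)).1 ha hb hab
    rwa [Convex.combo_affine_apply hab]
  calc f (v (γ (a • s + b • t))) ≤ f (a • v (γ s) + b • v (γ t)) :=
        (hv _ (hγ _ (convex_Icc 0 1 hs ht ha hb hab))).2 hmem
    _ ≤ a • f (v (γ s)) + b • f (v (γ t)) := hf.2 (mem_univ _) (mem_univ _) ha hb hab

theorem continuousOn_comp_lineMap_of_isMinOn (hf : StrictConvexOn ℝ univ f) (hfc : Continuous f)
    (hcoer : Tendsto f (cocompact E) atTop) {K : X → Set E}
    (hKconv : Convex ℝ {p : X × E | p.2 ∈ K p.1}) (hKclosed : IsClosed {p : X × E | p.2 ∈ K p.1})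
    {v : X → E} {x y : X} (hv : ∀ z ∈ segment ℝ x y, v z ∈ K z ∧ IsMinOn f (K z) (v z)) :
    ContinuousOn (fun t => v (AffineMap.lineMap x y t)) (Icc (0 : ℝ) 1) := by
  set γ : ℝ →ᵃ[ℝ] X := AffineMap.lineMap x y
  have hγ : ∀ t ∈ Icc (0 : ℝ) 1, γ t ∈ segment ℝ x y := fun t ht => lineMap_mem_segment ℝ x y ht
  set V : ℝ → ℝ := fun t => f (v (γ t))
  have hV : ConvexOn ℝ (Icc 0 1) V := convexOn_comp_lineMap_of_isMinOn hf.convexOn hKconv hv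
  obtain ⟨T, hT, hfT⟩ : ∃ T, IsCompact T ∧ Tᶜ ⊆ {z | max (V 0) (V 1) < f z} :=
    mem_cocompact.1 (hcoer.eventually (eventually_gt_atTop _))
  have hvT : ∀ t ∈ Icc (0 : ℝ) 1, v (γ t) ∈ T := fun t ht => by
    by_contra hnot
    have hle : V t ≤ max (V 0) (V 1) :=
      hV.le_on_segment (left_mem_Icc.2 zero_le_one) (right_mem_Icc.2 zero_le_one)
        (by rwa [segment_eq_Icc zero_le_one])
    exact (hfT hnot).not_ge hle
  intro t ht
  obtain ⟨M, hM⟩ := hV.exists_le_add_mul_abs_sub ht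
  refine hT.tendsto_nhds_of_unique_mapClusterPt (eventually_nhdsWithin_of_forall hvT)
    fun a _ ha => ?_
  obtain ⟨U, hUl, hUa⟩ := mapClusterPt_iff_ultrafilter.1 ha
  have hUt : Tendsto id (U : Filter ℝ) (𝓝 t) := hUl.trans nhdsWithin_le_nhds
  have hUI : ∀ᶠ s in (U : Filter ℝ), s ∈ Icc (0 : ℝ) 1 := hUl self_mem_nhdsWithin
  have haK : a ∈ K (γ t) :=
    hKclosed.mem_of_tendsto ((AffineMap.lineMap_continuous.tendsto t).comp hUt |>.prodMk_nhds hUa)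
      (hUI.mono fun s hs => (hv _ (hγ s hs)).1)
  -- upper semicontinuity of the convex value function bounds the value at the limit
  have hfa : f a ≤ V t := by
    refine le_of_tendsto_of_tendsto ((hfc.tendsto a).comp hUa) ?_ (hUI.mono fun s hs => hM s hs)
    simpa using (((continuous_sub_right t).abs.tendsto t).comp hUt).const_mul M |>.const_add (V t)
  have hamin : IsMinOn f (K (γ t)) a := fun z hz => hfa.trans ((hv _ (hγ t ht)).2 hz)
  exact (hf.subset (subset_univ _) (hKconv.prodMk_preimage _)).eq_of_isMinOn hamin
    (hv _ (hγ t ht)).2 haK (hv _ (hγ t ht)).1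

end ParametricMinimization

section AffinePieces

variable {E : Type*} [NormedAddCommGroup E] [NormedSpace ℝ E] {ι : Type*}

theorem norm_sub_le_of_forall_eq_affine [Finite ι] {h : ℝ → E} {p u : ι → E} {L : ℝ}
    (hL : ∀ i, ‖u i‖ ≤ L) {a b : ℝ} (hab : a ≤ b) (hh : ContinuousOn h (Icc a b))
    (hpiece : ∀ t ∈ Icc a b, ∃ i, h t = p i + t • u i) :
    ‖h b - h a‖ ≤ L * (b - a) := by
  refine image_le_of_liminf_slope_right_le_deriv_boundary (f := fun t => ‖h t - h a‖)
    (hh.sub continuousOn_const).norm (by simp) (by fun_prop)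
    (fun t _ => ((hasDerivWithinAt_id t _).sub_const a).const_mul L |>.congr_deriv (mul_one L))
    ?_ ⟨hab, le_rfl⟩
  intro t ht r hr
  have hIcc : Icc a b ∈ 𝓝[>] t := Icc_mem_nhdsGT_of_mem ht
  obtain ⟨i, hi⟩ : ∃ i, ∃ᶠ s in 𝓝[>] t, h s = p i + s • u i :=
    frequently_exists.1 (eventually_of_mem hIcc hpiece).frequently
  have hti : h t = p i + t • u i :=
    tendsto_nhds_unique_of_frequently_eq
      ((hh t (Ico_subset_Icc_self ht)).mono_of_mem_nhdsWithin hIcc)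
      (by fun_prop : Continuous fun s : ℝ => p i + s • u i).continuousWithinAt hi
  refine (hi.and_eventually self_mem_nhdsWithin).mono fun s ⟨hs, hts⟩ => ?_
  have hts : 0 < s - t := sub_pos.2 hts
  calc slope (fun t => ‖h t - h a‖) t s ≤ ‖h s - h t‖ / (s - t) := by
        rw [slope_def_field]
        gcongr
        simpa using norm_sub_norm_le (h s - h a) (h t - h a)
    _ = ‖u i‖ := by
        rw [hs, hti, add_sub_add_left_eq_sub, ← sub_smul, norm_smul, Real.norm_of_nonneg hts.le,
          mul_div_cancel_left₀ _ hts.ne']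
    _ < r := (hL i).trans_lt hr

theorem lipschitzOnWith_of_forall_eq_affine {X : Type*} [NormedAddCommGroup X]
    [NormedSpace ℝ X] [Fintype ι] {C : Set X} (hC : Convex ℝ C) {v : X → E}
    (ℓ : ι → X →L[ℝ] E) (b : ι → E) (hpiece : ∀ x ∈ C, ∃ i, v x = ℓ i x + b i)
    (hcont : ∀ x ∈ C, ∀ y ∈ C,
      ContinuousOn (fun t => v (AffineMap.lineMap x y t)) (Icc (0 : ℝ) 1)) :
    LipschitzOnWith (∑ i, ‖ℓ i‖₊) v C := by
  refine LipschitzOnWith.of_dist_le_mul fun y hy x hx => ?_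
  have hbound : ∀ i, ‖ℓ i (y - x)‖ ≤ (∑ i, ‖ℓ i‖₊ : NNReal) * dist y x := fun i =>
    calc ‖ℓ i (y - x)‖ ≤ ‖ℓ i‖ * ‖y - x‖ := (ℓ i).le_opNorm _
      _ ≤ _ := by
        rw [dist_eq_norm, NNReal.coe_sum]
        gcongr
        exact Finset.single_le_sum (f := fun i => ‖ℓ i‖) (fun _ _ => norm_nonneg _)
          (Finset.mem_univ i)
  have hpiece' : ∀ t ∈ Icc (0 : ℝ) 1,
      ∃ i, v (AffineMap.lineMap x y t) = (ℓ i x + b i) + t • ℓ i (y - x) := by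
    intro t ht
    obtain ⟨i, hi⟩ := hpiece _ (hC.lineMap_mem hx hy ht)
    refine ⟨i, ?_⟩
    rw [hi, AffineMap.lineMap_apply_module', map_add, map_smul]
    abel
  simpa [dist_eq_norm] using
    norm_sub_le_of_forall_eq_affine hbound zero_le_one (hcont x hx y hy) hpiece'

end AffinePieces

theorem LinearMap.exists_eq_add_of_injective {K V W X : Type*} [Field K] [AddCommGroup V]
    [Module K V] [AddCommGroup W] [Module K W] [AddCommGroup X] [Module K X] {Θ : V →ₗ[K] W}
    (hΘ : Function.Injective Θ) (ρ : X →ₗ[K] W) (c : W) :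
    ∃ (ℓ : X →ₗ[K] V) (b : V), ∀ x v, Θ v = ρ x + c → v = ℓ x + b := by
  obtain ⟨θ, hθ⟩ := Θ.exists_leftInverse_of_injective (LinearMap.ker_eq_bot.2 hΘ)
  refine ⟨θ ∘ₗ ρ, θ c, fun x v h => ?_⟩
  rw [LinearMap.comp_apply, ← map_add, ← h, ← LinearMap.comp_apply, hθ, LinearMap.id_apply]

theorem Matrix.PosDef.exists_pos_mul_sq_norm_le {n : Type*} [Fintype n] {H : Matrix n n ℝ}
    (hH : H.PosDef) : ∃ μ > 0, ∀ v : n → ℝ, μ * ‖v‖ ^ 2 ≤ v ⬝ᵥ H *ᵥ v := by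
  have hhom : ∀ (c : ℝ) (v : n → ℝ), c • v ⬝ᵥ H *ᵥ (c • v) = c ^ 2 * (v ⬝ᵥ H *ᵥ v) := by
    intro c v
    simp only [mulVec_smul, dotProduct_smul, smul_dotProduct, smul_eq_mul]
    ring
  rcases subsingleton_or_nontrivial (n → ℝ) with h | h
  · exact ⟨1, one_pos, fun v => by simp [Subsingleton.elim v 0]⟩
  obtain ⟨u, hu, hmin⟩ := (isCompact_sphere (0 : n → ℝ) 1).exists_isMinOn
    (NormedSpace.sphere_nonempty.2 zero_le_one)
    (continuous_id.dotProduct (continuous_const.matrix_mulVec continuous_id)).continuousOn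
  refine ⟨_, by simpa using hH.dotProduct_mulVec_pos (ne_zero_of_mem_unit_sphere ⟨u, hu⟩),
    fun v => ?_⟩
  rcases eq_or_ne v 0 with rfl | hv
  · simp
  have hv' : ‖v‖⁻¹ • v ∈ Metric.sphere (0 : n → ℝ) 1 := by
    simp [norm_smul, norm_ne_zero_iff.2 hv]
  calc (u ⬝ᵥ H *ᵥ u) * ‖v‖ ^ 2 ≤ (‖v‖⁻¹ • v ⬝ᵥ H *ᵥ (‖v‖⁻¹ • v)) * ‖v‖ ^ 2 := by
        gcongr; exact hmin hv'
    _ = v ⬝ᵥ H *ᵥ v := by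
        rw [hhom]; field_simp

noncomputable section QuadraticProgram

variable {n m p : Type*} [Fintype n] [Fintype p]

def qpObjective (H : Matrix n n ℝ) (q : n → ℝ) (v : n → ℝ) : ℝ :=
  (1 / 2) * (v ⬝ᵥ H *ᵥ v) + q ⬝ᵥ v

def qpFeasibleSet (G : Matrix m n ℝ) (w : m → ℝ) (S : Matrix m p ℝ) (x : p → ℝ) :
    Set (n → ℝ) :=
  {v | ∀ i, (G *ᵥ v) i ≤ w i + (S *ᵥ x) i}

variable {H : Matrix n n ℝ} {q : n → ℝ} {G : Matrix m n ℝ} {w : m → ℝ} {S : Matrix m p ℝ}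

theorem qpObjective_add_smul (hH : H.IsSymm) (v e : n → ℝ) (t : ℝ) :
    qpObjective H q (v + t • e) =
      qpObjective H q v + t * ((H *ᵥ v + q) ⬝ᵥ e) + t ^ 2 / 2 * (e ⬝ᵥ H *ᵥ e) := by
  have hsymm : v ⬝ᵥ H *ᵥ e = H *ᵥ v ⬝ᵥ e := by
    rw [dotProduct_mulVec, ← mulVec_transpose, hH.eq, dotProduct_comm]
  simp only [qpObjective, mulVec_add, mulVec_smul, dotProduct_add, add_dotProduct,
    dotProduct_smul, smul_dotProduct, smul_eq_mul, hsymm, dotProduct_comm e (H *ᵥ v)]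
  ring

theorem continuous_qpObjective : Continuous (qpObjective H q) := by
  unfold qpObjective
  fun_prop

theorem strictConvexOn_qpObjective (hH : H.PosDef) : StrictConvexOn ℝ univ (qpObjective H q) := by
  have hsymm : H.IsSymm := isHermitian_iff_isSymm.1 hH.isHermitian
  refine ⟨convex_univ, fun x _ y _ hxy a b ha hb hab => ?_⟩
  obtain rfl : a = 1 - b := by linarith
  have hcomb : (1 - b) • x + b • y = x + b • (y - x) := by
    rw [sub_smul, one_smul, smul_sub]; abel
  have hy : y = x + (1 : ℝ) • (y - x) := by simp
  have hQ : 0 < (y - x) ⬝ᵥ H *ᵥ (y - x) := by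
    simpa using hH.dotProduct_mulVec_pos (sub_ne_zero.2 hxy.symm)
  rw [hcomb, qpObjective_add_smul hsymm, hy, qpObjective_add_smul hsymm, ← hy, smul_eq_mul,
    smul_eq_mul]
  nlinarith [mul_pos (mul_pos ha hb) hQ]

theorem tendsto_qpObjective_cocompact (hH : H.PosDef) :
    Tendsto (qpObjective H q) (cocompact (n → ℝ)) atTop := by
  obtain ⟨μ, hμ, hQ⟩ := hH.exists_pos_mul_sq_norm_le
  let ψ : (n → ℝ) →L[ℝ] ℝ := LinearMap.toContinuousLinearMap (dotProductBilin ℝ ℝ q)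
  have hlow : ∀ v, ‖v‖ * (μ / 2 * ‖v‖ - ‖ψ‖) ≤ qpObjective H q v := fun v => by
    have hψ : |q ⬝ᵥ v| ≤ ‖ψ‖ * ‖v‖ := ψ.le_opNorm v
    unfold qpObjective
    nlinarith [hQ v, neg_abs_le (q ⬝ᵥ v)]
  refine tendsto_atTop_mono hlow ((?_ : Tendsto (fun r : ℝ => r * (μ / 2 * r - ‖ψ‖)) atTop
    atTop).comp tendsto_norm_cocompact_atTop)
  exact tendsto_id.atTop_mul_atTop₀ (tendsto_atTop_add_const_right _ _
    (tendsto_id.const_mul_atTop (half_pos hμ)))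

theorem convex_qpFeasibleSet_graph :
    Convex ℝ {xv : (p → ℝ) × (n → ℝ) | xv.2 ∈ qpFeasibleSet G w S xv.1} := by
  rintro ⟨x₁, v₁⟩ h₁ ⟨x₂, v₂⟩ h₂ a b ha hb hab i
  simp only [Prod.smul_mk, Prod.mk_add_mk, mulVec_add, mulVec_smul, Pi.add_apply,
    Pi.smul_apply, smul_eq_mul]
  have := add_le_add (mul_le_mul_of_nonneg_left (h₁ i) ha) (mul_le_mul_of_nonneg_left (h₂ i) hb)
  linear_combination this + w i * hab

theorem isClosed_qpFeasibleSet_graph :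
    IsClosed {xv : (p → ℝ) × (n → ℝ) | xv.2 ∈ qpFeasibleSet G w S xv.1} := by
  have : {xv : (p → ℝ) × (n → ℝ) | xv.2 ∈ qpFeasibleSet G w S xv.1} =
      ⋂ i, {xv | (G *ᵥ xv.2) i ≤ w i + (S *ᵥ xv.1) i} := by
    ext; simp [qpFeasibleSet]
  rw [this]
  exact isClosed_iInter fun i => isClosed_le (by fun_prop) (by fun_prop)

theorem convex_qpFeasibleSet (x : p → ℝ) : Convex ℝ (qpFeasibleSet G w S x) :=
  (convex_qpFeasibleSet_graph (G := G) (w := w) (S := S)).prodMk_preimage x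

theorem isClosed_qpFeasibleSet (x : p → ℝ) : IsClosed (qpFeasibleSet G w S x) :=
  (isClosed_qpFeasibleSet_graph (G := G) (w := w) (S := S)).preimage (Continuous.prodMk_right x)

theorem dotProduct_eq_zero_of_isMinOn_qpFeasibleSet [Fintype m] (hH : H.IsSymm) {x : p → ℝ}
    {v : n → ℝ} (hv : v ∈ qpFeasibleSet G w S x)
    (hmin : IsMinOn (qpObjective H q) (qpFeasibleSet G w S x) v)
    {t : n → ℝ} (ht : ∀ i, (G *ᵥ v) i = w i + (S *ᵥ x) i → (G *ᵥ t) i = 0) :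
    (H *ᵥ v + q) ⬝ᵥ t = 0 := by
  have hfeas : ∀ᶠ ε in 𝓝 (0 : ℝ), v + ε • t ∈ qpFeasibleSet G w S x := by
    refine eventually_all.2 fun i => ?_
    have hG : ∀ ε : ℝ, (G *ᵥ (v + ε • t)) i = (G *ᵥ v) i + ε * (G *ᵥ t) i := fun ε => by
      simp [mulVec_add, mulVec_smul]
    simp only [hG]
    by_cases hi : (G *ᵥ v) i = w i + (S *ᵥ x) i
    · exact Eventually.of_forall fun ε => by rw [ht i hi, mul_zero, add_zero]; exact hv i
    · have hlim : Tendsto (fun ε : ℝ => (G *ᵥ v) i + ε * (G *ᵥ t) i) (𝓝 0) (𝓝 ((G *ᵥ v) i)) := by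
        simpa using ((tendsto_id (x := 𝓝 (0 : ℝ))).mul_const ((G *ᵥ t) i)).const_add ((G *ᵥ v) i)
      exact (hlim.eventually (gt_mem_nhds (lt_of_le_of_ne (hv i) hi))).mono fun ε hε => hε.le
  have hloc : IsLocalMin (fun ε : ℝ => qpObjective H q (v + ε • t)) 0 :=
    hfeas.mono fun ε hε => by simpa using hmin hε
  have hderiv : HasDerivAt (fun ε : ℝ => qpObjective H q (v + ε • t)) ((H *ᵥ v + q) ⬝ᵥ t) 0 := by
    simp_rw [qpObjective_add_smul hH]
    exact (HasDerivAt.add (((hasDerivAt_id (0 : ℝ)).mul_const _).const_add _)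
      (((hasDerivAt_pow 2 (0 : ℝ)).div_const 2).mul_const _)).congr_deriv (by simp)
  exact hloc.hasDerivAt_eq_zero hderiv

theorem exists_affine_eq_of_active_kkt [Fintype m] (hH : H.PosDef) (A : Finset m) :
    ∃ (ℓ : (p → ℝ) →L[ℝ] (n → ℝ)) (b : n → ℝ), ∀ x v,
      (∀ i ∈ A, (G *ᵥ v) i = w i + (S *ᵥ x) i) →
      (∀ t, (∀ i ∈ A, (G *ᵥ t) i = 0) → (H *ᵥ v + q) ⬝ᵥ t = 0) → v = ℓ x + b := by
  let rows : (n → ℝ) →ₗ[ℝ] (A → ℝ) := LinearMap.pi fun i => LinearMap.proj (i : m) ∘ₗ G.mulVecLin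
  let W := LinearMap.ker rows
  -- `v` is pinned down by its active constraint values and by `H v` on the tangent space `W`
  let Θ : (n → ℝ) →ₗ[ℝ] (A → ℝ) × (W → ℝ) :=
    rows.prod (LinearMap.pi fun t : W => dotProductBilin ℝ ℝ (t : n → ℝ) ∘ₗ H.mulVecLin)
  have hΘ : Function.Injective Θ := by
    rw [← LinearMap.ker_eq_bot, LinearMap.ker_eq_bot']
    intro u hu
    have hQ : u ⬝ᵥ H *ᵥ u = 0 := congrFun (congrArg Prod.snd hu) ⟨u, congrArg Prod.fst hu⟩
    by_contra hne
    exact (hH.dotProduct_mulVec_pos hne).ne' (by simpa using hQ)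
  obtain ⟨ℓ, b, hℓ⟩ := LinearMap.exists_eq_add_of_injective hΘ
    ((LinearMap.pi fun i : A => LinearMap.proj (i : m) ∘ₗ S.mulVecLin).prod 0)
    (fun i => w i, fun t => -(q ⬝ᵥ t))
  refine ⟨LinearMap.toContinuousLinearMap ℓ, b, fun x v hact hstat => hℓ x v ?_⟩
  refine Prod.ext (funext fun i => ?_) (funext fun t => ?_)
  · simp [Θ, rows, hact i i.2, add_comm]
  · have ht : ∀ i ∈ A, (G *ᵥ t) i = 0 := fun i hi => congrFun t.2 ⟨i, hi⟩
    have := hstat t ht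
    rw [add_dotProduct, dotProduct_comm] at this
    simp [Θ]
    linarith

theorem exists_affine_pieces_of_isMinOn [Fintype m] (hH : H.PosDef) :
    ∃ (ℓ : Finset m → (p → ℝ) →L[ℝ] (n → ℝ)) (b : Finset m → n → ℝ), ∀ x v,
      v ∈ qpFeasibleSet G w S x → IsMinOn (qpObjective H q) (qpFeasibleSet G w S x) v →
      ∃ A, v = ℓ A x + b A := by
  classical
  choose ℓ b hℓ using exists_affine_eq_of_active_kkt (G := G) (w := w) (S := S) (q := q) hH
  refine ⟨ℓ, b, fun x v hv hmin => ⟨({i | (G *ᵥ v) i = w i + (S *ᵥ x) i} : Finset m), ?_⟩⟩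
  refine hℓ _ x v (fun i hi => (Finset.mem_filter.1 hi).2) fun t ht => ?_
  exact dotProduct_eq_zero_of_isMinOn_qpFeasibleSet (isHermitian_iff_isSymm.1 hH.isHermitian)
    hv hmin fun i hi => ht i (by simpa using hi)

end QuadraticProgram

theorem stmt17_general {d q r : ℕ}
    (H : Matrix (Fin d) (Fin d) ℝ) (qvec : Fin d → ℝ)
    (G : Matrix (Fin r) (Fin d) ℝ) (w : Fin r → ℝ) (S : Matrix (Fin r) (Fin q) ℝ)
    (hHpd : H.PosDef)
    (D : Set (Fin q → ℝ))
    (hfeas : ∀ x ∈ D, {v : Fin d → ℝ | ∀ i, (G.mulVec v) i ≤ w i + (S.mulVec x) i}.Nonempty) :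
    ∃ vstar : (Fin q → ℝ) → (Fin d → ℝ),
      (∀ x ∈ D,
        (∀ i, (G.mulVec (vstar x)) i ≤ w i + (S.mulVec x) i) ∧
        (∀ v : Fin d → ℝ, (∀ i, (G.mulVec v) i ≤ w i + (S.mulVec x) i) →
          (1 / 2) * dotProduct (vstar x) (H.mulVec (vstar x))
              + dotProduct qvec (vstar x)
            ≤ (1 / 2) * dotProduct v (H.mulVec v) + dotProduct qvec v) ∧
        (∀ v : Fin d → ℝ, (∀ i, (G.mulVec v) i ≤ w i + (S.mulVec x) i) →
          (∀ u : Fin d → ℝ, (∀ i, (G.mulVec u) i ≤ w i + (S.mulVec x) i) →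
            (1 / 2) * dotProduct v (H.mulVec v) + dotProduct qvec v
              ≤ (1 / 2) * dotProduct u (H.mulVec u) + dotProduct qvec u) →
          v = vstar x)) ∧
      (∀ Cset : Set (Fin q → ℝ), Convex ℝ Cset → Cset ⊆ D →
        ∃ Lc : NNReal, LipschitzOnWith Lc vstar Cset) := by
  have hstrict := strictConvexOn_qpObjective (q := qvec) hHpd
  have hcoer := tendsto_qpObjective_cocompact (q := qvec) hHpd
  have hmin : ∀ x ∈ D, ∃ v ∈ qpFeasibleSet G w S x,
      IsMinOn (qpObjective H qvec) (qpFeasibleSet G w S x) v := fun x hx =>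
    exists_isMinOn_of_tendsto_cocompact continuous_qpObjective hcoer
      (isClosed_qpFeasibleSet x) (hfeas x hx)
  choose! vstar hvK hvmin using hmin
  have huniq : ∀ x ∈ D, ∀ v ∈ qpFeasibleSet G w S x,
      IsMinOn (qpObjective H qvec) (qpFeasibleSet G w S x) v → v = vstar x :=
    fun x hx v hv hvmin' => (hstrict.subset (subset_univ _) (convex_qpFeasibleSet x)).eq_of_isMinOn
      hvmin' (hvmin x hx) hv (hvK x hx)
  obtain ⟨ℓ, b, hpiece⟩ :=
    exists_affine_pieces_of_isMinOn (G := G) (w := w) (S := S) (q := qvec) hHpd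
  refine ⟨vstar, fun x hx => ⟨hvK x hx, isMinOn_iff.1 (hvmin x hx),
    fun v hv hvmin' => huniq x hx v hv (isMinOn_iff.2 hvmin')⟩,
    fun C hC hCD => ⟨∑ A, ‖ℓ A‖₊, ?_⟩⟩
  refine lipschitzOnWith_of_forall_eq_affine hC ℓ b
    (fun x hx => hpiece x _ (hvK x (hCD hx)) (hvmin x (hCD hx))) fun x hx y hy => ?_
  refine continuousOn_comp_lineMap_of_isMinOn (K := qpFeasibleSet G w S) hstrict
    continuous_qpObjective hcoer convex_qpFeasibleSet_graph isClosed_qpFeasibleSet_graph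
    fun z hz => ?_
  have hzD := hCD (hC.segment_subset hx hy hz)
  exact ⟨hvK z hzD, hvmin z hzD⟩

/-- the solution map of a strongly convex multiparametric QP is
single-valued and Lipschitz on convex subsets of the parameter domain. -/
theorem stmt17 {d q r : ℕ}
    (H : Matrix (Fin d) (Fin d) ℝ) (qvec : Fin d → ℝ)
    (G : Matrix (Fin r) (Fin d) ℝ) (w : Fin r → ℝ) (S : Matrix (Fin r) (Fin q) ℝ)
    (hHsymm : H.IsSymm) (hHpd : H.PosDef)
    (D : Set (Fin q → ℝ))
    (hfeas : ∀ x ∈ D, {v : Fin d → ℝ | ∀ i, (G.mulVec v) i ≤ w i + (S.mulVec x) i}.Nonempty) :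
    ∃ vstar : (Fin q → ℝ) → (Fin d → ℝ),
      (∀ x ∈ D,
        (∀ i, (G.mulVec (vstar x)) i ≤ w i + (S.mulVec x) i) ∧
        (∀ v : Fin d → ℝ, (∀ i, (G.mulVec v) i ≤ w i + (S.mulVec x) i) →
          (1 / 2) * dotProduct (vstar x) (H.mulVec (vstar x))
              + dotProduct qvec (vstar x)
            ≤ (1 / 2) * dotProduct v (H.mulVec v) + dotProduct qvec v) ∧
        (∀ v : Fin d → ℝ, (∀ i, (G.mulVec v) i ≤ w i + (S.mulVec x) i) →
          (∀ u : Fin d → ℝ, (∀ i, (G.mulVec u) i ≤ w i + (S.mulVec x) i) →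
            (1 / 2) * dotProduct v (H.mulVec v) + dotProduct qvec v
              ≤ (1 / 2) * dotProduct u (H.mulVec u) + dotProduct qvec u) →
          v = vstar x)) ∧
      (∀ Cset : Set (Fin q → ℝ), Convex ℝ Cset → Cset ⊆ D →
        ∃ Lc : NNReal, LipschitzOnWith Lc vstar Cset) :=
  stmt17_general H qvec G w S hHpd D hfeas
end
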